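/- Let q be a power of 2, f ∈ F_q[T], and g a nonzero integer constant viewed in F_q. Let W_n be defined by W_0 = 0, W_1 = 1, W_n = f·W_{n-1} + g·W_{n-2}. Then for all n ≥ 1, W_{2n} = f·W_n^2 and W_{2n+1} = (W_{n+1} + g·W_n)^2 in F_q[T]. -/

import Mathlib

/-! In characteristic 2 the doubling formulas `W (2n) = W n (f W n + 2 g W (n-1))` and
`W (2n+1) = W (n+1)² + g W n²`, valid in any commutative ring, lose their cross terms, and an
integer `g` satisfies `g² = g` there, so `W (n+1)² + g W n² = (W (n+1) + g W n)²`. -/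

open Polynomial

noncomputable def lucasW {R : Type*} [CommRing R] (f g : Polynomial R) : ℕ → Polynomial R
  | 0 => 0
  | 1 => 1
  | n + 2 => f * lucasW f g (n + 1) + g * lucasW f g n

namespace lucasW

variable {R : Type*} [CommRing R] (f g : R[X])

@[simp]
theorem zero : lucasW f g 0 = 0 := rfl

@[simp]
theorem one : lucasW f g 1 = 1 := rfl

theorem add_two (n : ℕ) : lucasW f g (n + 2) = f * lucasW f g (n + 1) + g * lucasW f g n := rfl

theorem add_add_one (m n : ℕ) :
    lucasW f g (m + n + 1) =
      lucasW f g (m + 1) * lucasW f g (n + 1) + g * lucasW f g m * lucasW f g n := by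
  induction m using Nat.twoStepInduction with
  | zero => simp
  | one => simp [add_comm 1 n, add_two]
  | more m ih ih' =>
    rw [show m + 2 + n + 1 = m + n + 1 + 2 by ring, add_two,
      show m + n + 1 + 1 = m + 1 + n + 1 by ring, ih', ih, add_two f g (m + 1), add_two f g m]
    ring

theorem two_mul_add_two (n : ℕ) :
    lucasW f g (2 * n + 2) = lucasW f g (n + 1) * (f * lucasW f g (n + 1) + 2 * g * lucasW f g n) := by
  rw [show 2 * n + 2 = n + (n + 1) + 1 by ring, add_add_one, add_two]
  ring

theorem two_mul_add_one (n : ℕ) :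
    lucasW f g (2 * n + 1) = lucasW f g (n + 1) ^ 2 + g * lucasW f g n ^ 2 := by
  rw [two_mul, add_add_one]
  ring

variable [CharP R 2]

theorem two_mul_of_charTwo (n : ℕ) : lucasW f g (2 * n) = f * lucasW f g n ^ 2 := by
  cases n with
  | zero => simp
  | succ n =>
    rw [mul_add_one, two_mul_add_two, CharTwo.two_eq_zero]
    ring

theorem two_mul_add_one_of_charTwo {g : R[X]} (hg : g ^ 2 = g) (n : ℕ) :
    lucasW f g (2 * n + 1) = (lucasW f g (n + 1) + g * lucasW f g n) ^ 2 := by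
  rw [two_mul_add_one, CharTwo.add_sq, mul_pow, hg]

end lucasW

theorem CharTwo.intCast_sq {R : Type*} [Ring R] [CharP R 2] (g : ℤ) : (g : R) ^ 2 = g := by
  have hZMod : ∀ x : ZMod 2, x ^ 2 = x := by decide
  rw [← map_intCast (ZMod.castHom (dvd_refl 2) R), ← map_pow, hZMod]

theorem lucasW_double_char_two_general (F : Type*) [Field F] [CharP F 2]
    (f : Polynomial F) (g : ℤ) (n : ℕ) :
    lucasW f (C (g : F)) (2 * n) = f * (lucasW f (C (g : F)) n) ^ 2 ∧
      lucasW f (C (g : F)) (2 * n + 1) =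
        (lucasW f (C (g : F)) (n + 1) + C (g : F) * lucasW f (C (g : F)) n) ^ 2 :=
  ⟨lucasW.two_mul_of_charTwo f _ n,
    lucasW.two_mul_add_one_of_charTwo f (by rw [← map_pow, CharTwo.intCast_sq]) n⟩

theorem lucasW_double_char_two (F : Type*) [Field F] [Fintype F] [CharP F 2]
    (f : Polynomial F) (g : ℤ) (hg : (g : F) ≠ 0) (n : ℕ) (hn : 1 ≤ n) :
    lucasW f (C (g : F)) (2 * n) = f * (lucasW f (C (g : F)) n) ^ 2 ∧
      lucasW f (C (g : F)) (2 * n + 1) =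
        (lucasW f (C (g : F)) (n + 1) + C (g : F) * lucasW f (C (g : F)) n) ^ 2 :=
  lucasW_double_char_two_general F f g n
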